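/- Let G = W(C_n) with edge ideal I, n = 2m-1 odd, 2 ≤ m ≤ s, and M = (x_1x_2)(x_3x_4)⋯(x_{2m-3}x_{2m-2})(x_{2m-1}x_1)·N with N ∈ I^{s-m}. Then x_{n+1} x_j · M ∈ I^{s+1} for every 1 ≤ j ≤ 2n. -/

import Mathlib

open MvPolynomial
open Fin.NatCast

/-- The whiskered cycle `W(C_n)`: `Sum.inl i` is the cycle vertex `x_{i+1}` and
`Sum.inr i` is the whisker vertex `x_{n+i+1}`. -/
def whiskerCycle (n : ℕ) [NeZero n] : SimpleGraph (Fin n ⊕ Fin n) :=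
  SimpleGraph.fromRel (fun a b =>
    (∃ i : Fin n, a = Sum.inl i ∧ b = Sum.inl (i + 1)) ∨
    (∃ i : Fin n, a = Sum.inl i ∧ b = Sum.inr i))

/-- The edge ideal of a graph `G`. -/
noncomputable def edgeIdeal (K : Type*) [Field K] {V : Type*} (G : SimpleGraph V) :
    Ideal (MvPolynomial V K) :=
  Ideal.span {m | ∃ u v, G.Adj u v ∧ m = X u * X v}

/-!
Since `n = 2m - 1`, the chain `(x_1x_2)⋯(x_{2m-3}x_{2m-2})x_{2m-1}` is the product of all cycle
vertices, so `M = x_1 · (x_1⋯x_n) · N`. Every vertex `x_j` has a neighbour `x_c` on the cycle, and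
the remaining `n - 1 = 2(m - 1)` cycle vertices `x_{c+1}, …, x_{c-1}` form a path covered by `m - 1`
disjoint edges. Hence `x_{n+1} x_j M = (x_{n+1}x_1)(x_j x_c)(x_{c+1}x_{c+2})⋯ · N` is a product of
`m + 1` edges and an element of `I^{s-m}`.
-/

open Finset

lemma Finset.prod_range_two_mul {M : Type*} [CommMonoid M] (f : ℕ → M) (k : ℕ) :
    ∏ t ∈ range (2 * k), f t = ∏ t ∈ range k, f (2 * t) * f (2 * t + 1) := by
  induction k with
  | zero => simp
  | succ k ih => rw [Nat.mul_succ, prod_range_succ, prod_range_succ, prod_range_succ, ih, mul_assoc]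

lemma Finset.prod_range_eq_prod_range_sub_one_mul {M : Type*} [CommMonoid M] {n : ℕ} [NeZero n]
    (f : ℕ → M) : ∏ t ∈ range n, f t = (∏ t ∈ range (n - 1), f t) * f (n - 1) := by
  rw [← prod_range_succ, Nat.sub_add_cancel NeZero.one_le]

lemma Fin.prod_range_add_natCast {M : Type*} [CommMonoid M] {n : ℕ} [NeZero n]
    (g : Fin n → M) (a : Fin n) : ∏ t ∈ range n, g (a + t) = ∏ i, g i := by
  rw [← Fin.prod_univ_eq_prod_range (fun t => g (a + t))]
  simp only [Fin.cast_val_eq_self]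
  exact Equiv.prod_comp (Equiv.addLeft a) g

section EdgeIdeal

variable {K : Type*} [Field K] {V : Type*} {G : SimpleGraph V}

lemma X_mul_X_mem_edgeIdeal {u v : V} (h : G.Adj u v) :
    (X u * X v : MvPolynomial V K) ∈ edgeIdeal K G :=
  Ideal.subset_span ⟨u, v, h, rfl⟩

lemma prod_walk_mem_edgeIdeal_pow (p : ℕ → V) (hp : ∀ t, G.Adj (p t) (p (t + 1))) (k : ℕ) :
    ∏ t ∈ range (2 * k), (X (p t) : MvPolynomial V K) ∈ edgeIdeal K G ^ k := by
  rw [prod_range_two_mul]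
  have h := Ideal.prod_mem_prod (s := range k) (I := fun _ => edgeIdeal K G)
    fun t _ => X_mul_X_mem_edgeIdeal (hp (2 * t))
  rwa [prod_const, card_range] at h

end EdgeIdeal

namespace whiskerCycle

variable {n : ℕ} [NeZero n]

lemma adj_inl_add_one (hn : 2 ≤ n) (i : Fin n) :
    (whiskerCycle n).Adj (Sum.inl i) (Sum.inl (i + 1)) := by
  refine (SimpleGraph.fromRel_adj _ _ _).2 ⟨fun h => ?_, Or.inl (Or.inl ⟨i, rfl, rfl⟩)⟩
  have := Fin.one_eq_zero_iff.mp (left_eq_add.mp (Sum.inl_injective h))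
  omega

lemma adj_inr_inl (i : Fin n) : (whiskerCycle n).Adj (Sum.inr i) (Sum.inl i) :=
  (SimpleGraph.fromRel_adj _ _ _).2 ⟨Sum.inr_ne_inl, Or.inr (Or.inr ⟨i, rfl, rfl⟩)⟩

lemma exists_adj_inl (hn : 2 ≤ n) : ∀ j : Fin n ⊕ Fin n, ∃ c, (whiskerCycle n).Adj j (Sum.inl c)
  | .inl i => ⟨i + 1, adj_inl_add_one hn i⟩
  | .inr i => ⟨i, adj_inr_inl i⟩

end whiskerCycle

section CycleProduct

variable {K : Type*} [Field K] {n : ℕ} [NeZero n]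

lemma prod_inl_eq_X_mul_prod_range (c : Fin n) :
    ∏ i : Fin n, (X (Sum.inl i) : MvPolynomial (Fin n ⊕ Fin n) K) =
      X (Sum.inl c) * ∏ t ∈ range (n - 1), X (Sum.inl (c + 1 + t)) := by
  have hlast : c + 1 + ((n - 1 : ℕ) : Fin n) = c := by
    rw [add_assoc, add_eq_left, add_comm, ← Nat.cast_add_one, Nat.sub_add_cancel NeZero.one_le,
      Fin.natCast_self]
  rw [← Fin.prod_range_add_natCast _ (c + 1), prod_range_eq_prod_range_sub_one_mul, hlast, mul_comm]

lemma prod_chain_mul_eq_prod_inl {m : ℕ} (hn : n = 2 * m - 1) :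
    (∏ t ∈ range (m - 1),
        X (Sum.inl ((2 * t : ℕ) : Fin n)) * X (Sum.inl ((2 * t + 1 : ℕ) : Fin n))) *
      X (Sum.inl ((n - 1 : ℕ) : Fin n)) =
    ∏ i : Fin n, (X (Sum.inl i) : MvPolynomial (Fin n ⊕ Fin n) K) := by
  have h := prod_range_two_mul (fun t : ℕ => (X (Sum.inl (t : Fin n)) :
    MvPolynomial (Fin n ⊕ Fin n) K)) (m - 1)
  rw [← h, show 2 * (m - 1) = n - 1 by omega, ← prod_range_eq_prod_range_sub_one_mul,
    ← Fin.prod_range_add_natCast _ 0]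
  simp only [zero_add]

end CycleProduct

open whiskerCycle in
/-- for `n = 2m-1` odd with `2 ≤ m ≤ s`, if
`M = (x_1x_2)(x_3x_4)⋯(x_{2m-3}x_{2m-2})(x_{2m-1}x_1)·N` with `N ∈ I^{s-m}`,
then `x_{n+1} x_j · M ∈ I^{s+1}` for every vertex `x_j`, `1 ≤ j ≤ 2n`.  (Here `x_j = X (Sum.inl (j-1))` for
`1 ≤ j ≤ n` and `x_{n+1} = X (Sum.inr 0)`.) -/
theorem whisker_mul_all_mem (K : Type*) [Field K] (n m s : ℕ) [NeZero n]
    (hn : n = 2 * m - 1) (hm : 2 ≤ m) (hms : m ≤ s)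
    (N M : MvPolynomial (Fin n ⊕ Fin n) K)
    (hN : N ∈ edgeIdeal K (whiskerCycle n) ^ (s - m))
    (hM : M = (∏ t ∈ Finset.range (m - 1),
        X (Sum.inl ((2 * t : ℕ) : Fin n)) * X (Sum.inl ((2 * t + 1 : ℕ) : Fin n))) *
      (X (Sum.inl ((n - 1 : ℕ) : Fin n)) * X (Sum.inl (0 : Fin n))) * N) :
    ∀ j : Fin n ⊕ Fin n,
      X (Sum.inr (0 : Fin n)) * X j * M ∈ edgeIdeal K (whiskerCycle n) ^ (s + 1) := by
  intro j
  have hn2 : 2 ≤ n := by omega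
  obtain ⟨c, hjc⟩ := exists_adj_inl hn2 j
  have hsplit : X (Sum.inr (0 : Fin n)) * X j * M =
      X (Sum.inr 0) * X (Sum.inl 0) *
        (X j * X (Sum.inl c) * ∏ t ∈ range (2 * (m - 1)), X (Sum.inl (c + 1 + t))) * N := by
    rw [hM, ← mul_assoc _ (X _) (X (Sum.inl 0)), prod_chain_mul_eq_prod_inl hn,
      prod_inl_eq_X_mul_prod_range c, show n - 1 = 2 * (m - 1) by omega]
    ring
  rw [hsplit, show s + 1 = 1 + (1 + (m - 1)) + (s - m) by omega, pow_add, pow_add, pow_add, pow_one]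
  refine Ideal.mul_mem_mul (Ideal.mul_mem_mul (X_mul_X_mem_edgeIdeal (adj_inr_inl 0))
    (Ideal.mul_mem_mul (X_mul_X_mem_edgeIdeal hjc) ?_)) hN
  refine prod_walk_mem_edgeIdeal_pow (fun t => Sum.inl (c + 1 + t)) (fun t => ?_) _
  simpa only [Nat.cast_succ, ← add_assoc] using adj_inl_add_one hn2 (c + 1 + t)
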